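/- Let E = ℝⁿ and let F ⊆ E × E be a relation. Then F is maximally monotone (monotone with no proper monotone extension) if and only if both of the following hold: (1) for all (x₁, y₁), (x₂, y₂) ∈ F, ‖(x₁ − y₁) − (x₂ − y₂)‖ ≤ ‖(x₁ + y₁) − (x₂ + y₂)‖; and (2) for every a ∈ E there exist x, y ∈ E with (x, y) ∈ F and x + y = a. -/

import Mathlib

/-!
Monotonicity is the 1-Lipschitz condition, since `‖u + v‖² - ‖u - v‖² = 4⟪u, v⟫`; and a monotone
relation for which every `a` is a sum `x + y` with `(x, y) ∈ F` is maximal, because a point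
`(u, v)` monotonically related to `F` and paired with `(x, y) ∈ F`, `x + y = u + v`, satisfies
`-‖v - y‖² ≥ 0`.

The converse is Minty's theorem. After translating `F` so that it contains `0`, minimise
`2t + ‖x - a‖² + ‖y - a‖²` over the epigraph of the Fitzpatrick function
`φ(x, y) = sup_{(p, q) ∈ F} ⟪x, q⟫ + ⟪p, y⟫ - ⟪p, q⟫`, a closed convex set on which this
function is coercive. Maximality gives `⟪x, y⟫ ≤ t` at a minimiser `((x, y), t)`, and with the
first-order condition this shows that `(a - y, a - x)` is monotonically related to `F` with margin
`‖x + y - a‖²`. So it lies in `F`, and pairing it with itself forces `x + y = a`.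
-/

open RealInnerProductSpace

section

variable {E : Type*} [NormedAddCommGroup E] [InnerProductSpace ℝ E] {F : Set (E × E)}

def IsMonotoneRel (F : Set (E × E)) : Prop :=
  ∀ p ∈ F, ∀ q ∈ F, 0 ≤ ⟪p.2 - q.2, p.1 - q.1⟫

def IsMaxMonotoneRel (F : Set (E × E)) : Prop :=
  IsMonotoneRel F ∧ ∀ G : Set (E × E), IsMonotoneRel G → F ⊆ G → F = G

theorem real_inner_sub_sub (x₁ x₂ y₁ y₂ : E) :
    ⟪y₁ - y₂, x₁ - x₂⟫ = ⟪x₁, y₁⟫ - ⟪x₁, y₂⟫ - ⟪x₂, y₁⟫ + ⟪x₂, y₂⟫ := by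
  simp only [inner_sub_right, real_inner_comm x₁, real_inner_comm x₂]
  ring

theorem norm_sub_le_norm_add_iff_inner_nonneg (u v : E) :
    ‖u - v‖ ≤ ‖u + v‖ ↔ 0 ≤ ⟪u, v⟫ := by
  rw [← sq_le_sq₀ (norm_nonneg _) (norm_nonneg _), norm_sub_sq_real, norm_add_sq_real]
  constructor <;> intro h <;> linarith

theorem isMonotoneRel_iff_norm_sub_le_norm_add :
    IsMonotoneRel F ↔ ∀ p ∈ F, ∀ q ∈ F,
      ‖(p.1 - p.2) - (q.1 - q.2)‖ ≤ ‖(p.1 + p.2) - (q.1 + q.2)‖ := by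
  refine forall₂_congr fun p _ => forall₂_congr fun q _ => ?_
  rw [show (p.1 - p.2) - (q.1 - q.2) = (p.1 - q.1) - (p.2 - q.2) by abel,
    show (p.1 + p.2) - (q.1 + q.2) = (p.1 - q.1) + (p.2 - q.2) by abel,
    norm_sub_le_norm_add_iff_inner_nonneg, real_inner_comm]

theorem IsMonotoneRel.isMaxMonotoneRel_of_forall_exists_add_eq (hF : IsMonotoneRel F)
    (hsurj : ∀ a, ∃ x y, (x, y) ∈ F ∧ x + y = a) : IsMaxMonotoneRel F := by
  refine ⟨hF, fun G hG hFG => hFG.antisymm fun p hp => ?_⟩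
  obtain ⟨x, y, hxy, hsum⟩ := hsurj (p.1 + p.2)
  have hx : p.1 - x = -(p.2 - y) := by
    rw [eq_neg_iff_add_eq_zero, sub_add_sub_comm, hsum, sub_self]
  have hy : p.2 - y = 0 := by
    have := hG p hp (x, y) (hFG hxy)
    rw [hx, inner_neg_right, neg_nonneg] at this
    exact inner_self_eq_zero.1 (this.antisymm real_inner_self_nonneg)
  rw [hy, neg_zero] at hx
  obtain rfl : p = (x, y) := Prod.ext (sub_eq_zero.1 hx) (sub_eq_zero.1 hy)
  exact hxy

theorem IsMaxMonotoneRel.mem_of_forall_inner_nonneg (hF : IsMaxMonotoneRel F) {p : E × E}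
    (hp : ∀ q ∈ F, 0 ≤ ⟪p.2 - q.2, p.1 - q.1⟫) : p ∈ F := by
  have hp' : ∀ q ∈ F, 0 ≤ ⟪q.2 - p.2, q.1 - p.1⟫ := fun q hq => by
    rw [← neg_sub p.2, ← neg_sub p.1, inner_neg_neg]
    exact hp q hq
  have hmono : IsMonotoneRel (insert p F) := by
    rintro q (rfl | hq) r (rfl | hr)
    · simp
    · exact hp r hr
    · exact hp' q hq
    · exact hF.1 q hq r hr
  rw [hF.2 _ hmono (Set.subset_insert p F)]
  exact Set.mem_insert p F

theorem IsMaxMonotoneRel.nonempty (hF : IsMaxMonotoneRel F) : F.Nonempty := by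
  by_contra h
  rw [Set.not_nonempty_iff_eq_empty] at h
  exact (h ▸ hF.mem_of_forall_inner_nonneg (p := 0) (by simp [h]) : (0 : E × E) ∈ (∅ : Set _))

theorem IsMonotoneRel.preimage_add (hF : IsMonotoneRel F) (c : E × E) :
    IsMonotoneRel ((· + c) ⁻¹' F) := fun p hp q hq => by
  simpa using hF _ hp _ hq

theorem IsMaxMonotoneRel.preimage_add (hF : IsMaxMonotoneRel F) (c : E × E) :
    IsMaxMonotoneRel ((· + c) ⁻¹' F) := by
  refine ⟨hF.1.preimage_add c, fun G hG hFG => hFG.antisymm fun q hq => ?_⟩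
  have hFG' : F ⊆ (· + -c) ⁻¹' G := fun p hp => hFG (by simpa using hp)
  rw [Set.mem_preimage, hF.2 _ (hG.preimage_add (-c)) hFG']
  simpa using hq

def fitzpatrickEpigraph (F : Set (E × E)) : Set ((E × E) × ℝ) :=
  {w | ∀ p ∈ F, ⟪w.1.1, p.2⟫ + ⟪p.1, w.1.2⟫ - ⟪p.1, p.2⟫ ≤ w.2}

theorem isClosed_fitzpatrickEpigraph (F : Set (E × E)) : IsClosed (fitzpatrickEpigraph F) := by
  simp only [fitzpatrickEpigraph, Set.ofPred_forall]
  exact isClosed_biInter fun p _ => isClosed_le (by fun_prop) continuous_snd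

theorem convex_fitzpatrickEpigraph (F : Set (E × E)) : Convex ℝ (fitzpatrickEpigraph F) := by
  intro w hw v hv s t hs ht hst p hp
  simp only [Prod.fst_add, Prod.snd_add, Prod.smul_fst, Prod.smul_snd, smul_eq_mul,
    inner_add_left, inner_add_right, real_inner_smul_left, real_inner_smul_right]
  linear_combination s * hw p hp + t * hv p hp + ⟪p.1, p.2⟫ * hst

theorem IsMonotoneRel.mk_inner_mem_fitzpatrickEpigraph (hF : IsMonotoneRel F) {p : E × E}
    (hp : p ∈ F) : (p, ⟪p.1, p.2⟫) ∈ fitzpatrickEpigraph F := fun q hq => by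
  have := hF p hp q hq
  rw [real_inner_sub_sub] at this
  linarith

theorem IsMaxMonotoneRel.inner_le_of_mem_fitzpatrickEpigraph (hF : IsMaxMonotoneRel F)
    {w : (E × E) × ℝ} (hw : w ∈ fitzpatrickEpigraph F) : ⟪w.1.1, w.1.2⟫ ≤ w.2 := by
  by_contra! hlt
  have hmem : w.1 ∈ F := hF.mem_of_forall_inner_nonneg fun q hq => by
    have := hw q hq
    rw [real_inner_sub_sub]
    linarith
  linarith [hw w.1 hmem]

noncomputable def mintyObjective (a : E) (w : (E × E) × ℝ) : ℝ :=
  2 * w.2 + ‖w.1.1 - a‖ ^ 2 + ‖w.1.2 - a‖ ^ 2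

theorem IsMinOn.mintyObjective_deriv_nonneg {s : Set ((E × E) × ℝ)} (hs : Convex ℝ s) {a : E}
    {w v : (E × E) × ℝ} (hw : IsMinOn (mintyObjective a) s w) (hws : w ∈ s) (hv : v ∈ s) :
    0 ≤ v.2 - w.2 + ⟪w.1.1 - a, v.1.1 - w.1.1⟫ + ⟪w.1.2 - a, v.1.2 - w.1.2⟫ := by
  have h1 := ((hasFDerivAt_fst (p := w)).fst.sub_const a).norm_sq
  have h2 := ((hasFDerivAt_fst (p := w)).snd.sub_const a).norm_sq
  have := (hw.localize.on_subset subset_rfl).hasFDerivWithinAt_nonneg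
    (((hasFDerivAt_snd.const_mul 2).add h1).add h2).hasFDerivWithinAt
    (sub_mem_posTangentConeAt_of_segment_subset (hs.segment_subset hws hv))
  simp only [add_apply, smul_apply, ContinuousLinearMap.comp_apply, ContinuousLinearMap.coe_snd',
    ContinuousLinearMap.coe_fst', coe_innerSL_apply, Prod.snd_sub, Prod.fst_sub, smul_eq_mul,
    nsmul_eq_mul, Nat.cast_ofNat] at this
  linarith

theorem exists_isMinOn_mintyObjective [ProperSpace E] (hF : IsMonotoneRel F)
    (h0 : (0 : E × E) ∈ F) (a : E) :
    ∃ w ∈ fitzpatrickEpigraph F, IsMinOn (mintyObjective a) (fitzpatrickEpigraph F) w := by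
  have h0S : ((0 : E × E), (0 : ℝ)) ∈ fitzpatrickEpigraph F := by
    simpa using hF.mk_inner_mem_fitzpatrickEpigraph h0
  set C : Set ((E × E) × ℝ) :=
    (Metric.closedBall a (2 * ‖a‖) ×ˢ Metric.closedBall a (2 * ‖a‖)) ×ˢ Set.Icc 0 (‖a‖ ^ 2)
  have hC : IsCompact C :=
    (isCompact_closedBall _ _ |>.prod (isCompact_closedBall _ _)).prod isCompact_Icc
  have hsub : ∀ w ∈ fitzpatrickEpigraph F,
      mintyObjective a w < mintyObjective a (0, 0) → w ∈ C := by
    rintro ⟨⟨x, y⟩, t⟩ hw hlt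
    have ht : 0 ≤ t := by simpa using hw 0 h0
    simp only [mintyObjective, Prod.fst_zero, Prod.snd_zero, zero_sub, norm_neg, mul_zero,
      zero_add] at hlt
    have hball : ∀ z : E, ‖z - a‖ ^ 2 ≤ 2 * ‖a‖ ^ 2 → z ∈ Metric.closedBall a (2 * ‖a‖) := by
      intro z hz
      rw [Metric.mem_closedBall, dist_eq_norm]
      nlinarith [norm_nonneg (z - a), norm_nonneg a]
    refine ⟨⟨hball x ?_, hball y ?_⟩, ht, ?_⟩ <;>
      linarith [sq_nonneg ‖x - a‖, sq_nonneg ‖y - a‖]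
  refine ContinuousOn.exists_isMinOn' (by unfold mintyObjective; fun_prop)
    (isClosed_fitzpatrickEpigraph F) h0S ?_
  rw [Filter.eventually_inf_principal]
  filter_upwards [hC.compl_mem_cocompact] with w hwC hwS
  by_contra! hlt
  exact hwC (hsub w hwS hlt)

theorem IsMaxMonotoneRel.exists_add_eq_of_zero_mem [ProperSpace E] (hF : IsMaxMonotoneRel F)
    (h0 : (0 : E × E) ∈ F) (a : E) : ∃ x y, (x, y) ∈ F ∧ x + y = a := by
  obtain ⟨⟨⟨x, y⟩, t⟩, hwS, hmin⟩ := exists_isMinOn_mintyObjective hF.1 h0 a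
  have hxy : ⟪x, y⟫ ≤ t := hF.inner_le_of_mem_fitzpatrickEpigraph hwS
  have key : ∀ p ∈ F, ‖x + y - a‖ ^ 2 ≤ ⟪(a - x) - p.2, (a - y) - p.1⟫ := by
    intro p hp
    have hfoc := hmin.mintyObjective_deriv_nonneg (convex_fitzpatrickEpigraph F) hwS
      (hF.1.mk_inner_mem_fitzpatrickEpigraph hp)
    have e1 : ⟪(a - x) - p.2, (a - y) - p.1⟫
        = ⟪p.1, p.2⟫ + ⟪x - a, p.1⟫ + ⟪y - a, p.2⟫ + ⟪x - a, y - a⟫ := by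
      rw [show (a - x) - p.2 = -(p.2 + (x - a)) by abel,
        show (a - y) - p.1 = -(p.1 + (y - a)) by abel, inner_neg_neg, inner_add_left,
        inner_add_right, inner_add_right, real_inner_comm p.1 p.2, real_inner_comm (y - a) p.2]
      ring
    have e2 : ‖x + y - a‖ ^ 2 = ⟪x - a, x⟫ + ⟪x - a, y - a⟫ + ⟪x, y⟫ + ⟪y - a, y⟫ := by
      rw [← real_inner_self_eq_norm_sq, show x + y - a = (x - a) + y by abel, inner_add_left,
        show (x - a) + y = x + (y - a) by abel, inner_add_right, inner_add_right,
        real_inner_comm x y, real_inner_comm (y - a) y]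
      ring
    simp only [inner_sub_right] at hfoc
    linarith
  have hmem : (a - y, a - x) ∈ F :=
    hF.mem_of_forall_inner_nonneg fun q hq => (sq_nonneg _).trans (key q hq)
  have hsum : x + y - a = 0 := by simpa using key _ hmem
  refine ⟨a - y, a - x, hmem, ?_⟩
  rw [← sub_eq_zero, ← neg_eq_zero, ← hsum]
  abel

theorem IsMaxMonotoneRel.exists_add_eq [ProperSpace E] (hF : IsMaxMonotoneRel F) (a : E) :
    ∃ x y, (x, y) ∈ F ∧ x + y = a := by
  obtain ⟨c, hc⟩ := hF.nonempty
  obtain ⟨x, y, hxy, hsum⟩ :=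
    (hF.preimage_add c).exists_add_eq_of_zero_mem (by simpa using hc) (a - c.1 - c.2)
  refine ⟨x + c.1, y + c.2, hxy, ?_⟩
  rw [add_add_add_comm, hsum]
  abel

end

theorem maximally_monotone_iff_cayley_one_lipschitz_total
    (n : ℕ) (F : Set (EuclideanSpace ℝ (Fin n) × EuclideanSpace ℝ (Fin n))) :
    ((∀ p ∈ F, ∀ q ∈ F, 0 ≤ ⟪p.2 - q.2, p.1 - q.1⟫) ∧
      ∀ G : Set (EuclideanSpace ℝ (Fin n) × EuclideanSpace ℝ (Fin n)),
        (∀ p ∈ G, ∀ q ∈ G, 0 ≤ ⟪p.2 - q.2, p.1 - q.1⟫) → F ⊆ G → F = G) ↔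
    ((∀ p ∈ F, ∀ q ∈ F,
        ‖(p.1 - p.2) - (q.1 - q.2)‖ ≤ ‖(p.1 + p.2) - (q.1 + q.2)‖) ∧
      ∀ a : EuclideanSpace ℝ (Fin n),
        ∃ x y : EuclideanSpace ℝ (Fin n), (x, y) ∈ F ∧ x + y = a) := by
  change IsMaxMonotoneRel F ↔ _
  rw [← isMonotoneRel_iff_norm_sub_le_norm_add]
  exact ⟨fun hF => ⟨hF.1, hF.exists_add_eq⟩,
    fun ⟨hmono, hsurj⟩ => hmono.isMaxMonotoneRel_of_forall_exists_add_eq hsurj⟩
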